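/- arXiv:1706.03573 — 5 statements merged into one kernel-verified Lean document; each statement's English description precedes it below -/
import Mathlib

section
/- If $C \subset \mathbb{R}^n$ is a pointed closed convex cone with nonempty interior and $K_0, K_1 \subseteq C$ are closed convex subsets, then the Minkowski sum $K_0 + K_1$ is closed. -/
/-!
Since `C` is closed and pointed, the compact set `C ∩ sphere 0 1` lies at a positive distance `r`
from `-C`; rescaling gives `r * ‖x‖ ≤ ‖x + y‖` for all `x, y ∈ C`. Hence, near any point of the
closure of `K₀ + K₁`, the summand from `K₀` stays in a bounded, hence compact, part of `K₀`, and a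
compact set plus a closed set is closed.
-/

open Set Pointwise Metric

variable {E : Type*}

theorem exists_pos_mul_norm_le_norm_add_of_pointed [NormedAddCommGroup E] [NormedSpace ℝ E]
    [ProperSpace E] {C : Set E} (hC : IsClosed C)
    (hC_cone : ∀ x ∈ C, ∀ t : ℝ, 0 ≤ t → t • x ∈ C) (hC_pointed : C ∩ -C = {0}) :
    ∃ r > 0, ∀ x ∈ C, ∀ y ∈ C, r * ‖x‖ ≤ ‖x + y‖ := by
  have h_disj : Disjoint (C ∩ sphere 0 1) (-C) := by
    refine disjoint_left.mpr fun x ⟨hxC, hx1⟩ hxnC => ?_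
    have hx0 : x ∈ C ∩ -C := ⟨hxC, hxnC⟩
    rw [hC_pointed, mem_singleton_iff] at hx0
    simp [hx0] at hx1
  obtain ⟨r, hr, h_sep⟩ :=
    exists_pos_forall_lt_edist ((isCompact_sphere 0 1).inter_left hC) hC.neg h_disj
  refine ⟨r, hr, fun x hx y hy => ?_⟩
  rcases eq_or_ne x 0 with rfl | hx0
  · simp
  have hnx : 0 < ‖x‖ := norm_pos_iff.mpr hx0
  set t := ‖x‖⁻¹
  have ht : 0 ≤ t := inv_nonneg.mpr hnx.le
  have h_unit : t • x ∈ C ∩ sphere 0 1 :=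
    ⟨hC_cone x hx t ht, by simp [t, norm_smul, hnx.ne']⟩
  have h_neg : -(t • y) ∈ -C := by simpa using hC_cone y hy t ht
  have h_lt : (r : ℝ) < t * ‖x + y‖ := by
    have := h_sep _ h_unit _ h_neg
    rwa [edist_dist, ← ENNReal.ofReal_coe_nnreal,
      ENNReal.ofReal_lt_ofReal_iff_of_nonneg r.coe_nonneg, dist_eq_norm, sub_neg_eq_add, ← smul_add, norm_smul, Real.norm_of_nonneg ht] at this
  rw [lt_inv_mul_iff₀ hnx] at h_lt
  linarith

theorem isClosed_add_of_mul_norm_le_norm_add [SeminormedAddCommGroup E] [ProperSpace E]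
    {K₀ K₁ : Set E} (hK₀ : IsClosed K₀) (hK₁ : IsClosed K₁) {r : ℝ} (hr : 0 < r)
    (h : ∀ x ∈ K₀, ∀ y ∈ K₁, r * ‖x‖ ≤ ‖x + y‖) : IsClosed (K₀ + K₁) := by
  refine isClosed_of_closure_subset fun z hz => ?_
  set B := K₀ ∩ closedBall 0 ((‖z‖ + 1) / r)
  have hB_closed_add : IsClosed (B + K₁) :=
    hK₁.add_left_of_isCompact ((isCompact_closedBall _ _).inter_left hK₀)
  have h_near : ball z 1 ∩ (K₀ + K₁) ⊆ B + K₁ := by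
    rintro _ ⟨hw, x, hx, y, hy, rfl⟩
    refine ⟨x, ⟨hx, ?_⟩, y, hy, rfl⟩
    rw [mem_closedBall_zero_iff, le_div_iff₀' hr]
    exact (h x hx y hy).trans (norm_lt_of_mem_ball hw).le
  have hz_near : z ∈ closure (ball z 1 ∩ (K₀ + K₁)) :=
    isOpen_ball.inter_closure ⟨mem_ball_self one_pos, hz⟩
  exact add_subset_add_right inter_subset_left (hB_closed_add.closure_subset_iff.mpr h_near hz_near)

theorem closed_minkowski_sum_general {n : ℕ}
    (C K₀ K₁ : Set (EuclideanSpace ℝ (Fin n)))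
    (hC_closed : IsClosed C)
    (hC_cone : ∀ x ∈ C, ∀ r : ℝ, 0 ≤ r → r • x ∈ C)
    (hC_pointed : C ∩ (-C) = {0})
    (hK₀C : K₀ ⊆ C) (hK₀closed : IsClosed K₀)
    (hK₁C : K₁ ⊆ C) (hK₁closed : IsClosed K₁) :
    IsClosed (K₀ + K₁) := by
  obtain ⟨r, hr, h⟩ := exists_pos_mul_norm_le_norm_add_of_pointed hC_closed hC_cone hC_pointed
  exact isClosed_add_of_mul_norm_le_norm_add hK₀closed hK₁closed hr
    fun x hx y hy => h x (hK₀C hx) y (hK₁C hy)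

/-- If `C` is a pointed closed convex cone with nonempty interior and `K₀, K₁ ⊆ C` are
closed convex subsets, then the Minkowski sum `K₀ + K₁` is closed. -/
theorem closed_minkowski_sum {n : ℕ}
    (C K₀ K₁ : Set (EuclideanSpace ℝ (Fin n)))
    (hC_closed : IsClosed C) (hC_conv : Convex ℝ C)
    (hC_cone : ∀ x ∈ C, ∀ r : ℝ, 0 ≤ r → r • x ∈ C)
    (hC_pointed : C ∩ (-C) = {0})
    (hC_int : (interior C).Nonempty)
    (hK₀C : K₀ ⊆ C) (hK₀closed : IsClosed K₀) (hK₀conv : Convex ℝ K₀)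
    (hK₁C : K₁ ⊆ C) (hK₁closed : IsClosed K₁) (hK₁conv : Convex ℝ K₁) :
    IsClosed (K₀ + K₁) :=
  closed_minkowski_sum_general C K₀ K₁ hC_closed hC_cone hC_pointed hK₀C hK₀closed hK₁C hK₁closed
end

section
/- Let $C \subset \mathbb{R}^n$ be a pointed closed convex cone with nonempty interior, and let $A_0 = C \setminus K_0$, $A_1 = C \setminus K_1$ be $C$-coconvex sets (i.e., $K_0, K_1 \subseteq C$ are closed convex and $A_0, A_1$ have positive finite Lebesgue measure). Then for $\lambda \in (0,1)$, the set $(1-\lambda)A_0 \oplus \lambda A_1 := C \setminus ((1-\lambda)K_0 + \lambda K_1)$ satisfies the reversed Brunn–Minkowski inequality: $V_n((1-\lambda)A_0 \oplus \lambda A_1)^{1/n} \le (1-\lambda)V_n(A_0)^{1/n} + \lambda V_n(A_1)^{1/n}$. -/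
open Set Pointwise MeasureTheory Metric
open MeasureTheory.Measure (volumeIoiPow volumeIoiPow_apply_Iio)
open scoped ENNReal

/-!
Pass to polar coordinates: the volume of a measurable set is the integral over unit directions `u`
of the `r ^ (n - 1) dr`-measure of its ray section `{r > 0 | r • u ∈ A}`. If the section of
`C \ K` along a ray of the cone has finite measure, the closed convex set `K` must contain a whole
tail `[ρ, ∞)` of the ray, so the section is `(0, ρ)`, of measure `ρ ^ n / n`; and the tail of
`(1 - λ) • K₀ + λ • K₁` starts no later than `(1 - λ) ρ₀ + λ ρ₁`. Hence the `n`-th roots of the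
section measures obey the inequality ray by ray (trivially if a section of `A₀` or `A₁` has
infinite measure), and Minkowski's inequality in `L^n` over the sphere integrates it.
-/

theorem Convex.exists_forall_smul_mem_iff_le {E : Type*} [AddCommGroup E] [Module ℝ E]
    [TopologicalSpace E] [ContinuousSMul ℝ E] {K : Set E} (hKc : IsClosed K)
    (hKv : Convex ℝ K) {u : E} (hunb : ∀ c : ℝ, ∃ r, c ≤ r ∧ r • u ∈ K) :
    ∃ a : ℝ, 0 ≤ a ∧ ∀ r : ℝ, 0 ≤ r → (r • u ∈ K ↔ a ≤ r) := by
  set S : Set ℝ := Ici 0 ∩ LinearMap.toSpanSingleton ℝ E u ⁻¹' K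
  have hSc : IsClosed S :=
    isClosed_Ici.inter (hKc.preimage (continuous_id.smul continuous_const))
  have hSo : S.OrdConnected :=
    convex_iff_ordConnected.1 ((convex_Ici 0).inter (hKv.linear_preimage _))
  have hSb : BddBelow S := ⟨0, fun _ hr => hr.1⟩
  obtain ⟨r₀, hr₀, hr₀K⟩ := hunb 0
  have haS : sInf S ∈ S := hSc.csInf_mem ⟨r₀, hr₀, hr₀K⟩ hSb
  refine ⟨sInf S, haS.1, fun r hr => ⟨fun hrK => csInf_le hSb ⟨hr, hrK⟩, fun har => ?_⟩⟩
  obtain ⟨s, hrs, hsK⟩ := hunb r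
  exact (hSo.out haS ⟨hr.trans hrs, hsK⟩ ⟨har, hrs⟩).2

theorem volumeIoiPow_setOf_lt_coe_eq_top (N : ℕ) (c : ℝ) :
    volumeIoiPow N {r | c < (r : ℝ)} = ∞ := by
  set b := max 0 c
  have himg : Subtype.val '' {r : Ioi (0 : ℝ) | c < r} = Ioi b := by
    rw [show {r : Ioi (0 : ℝ) | c < r} = Subtype.val ⁻¹' Ioi c from rfl,
      Subtype.image_preimage_val, Ioi_inter_Ioi]
  have hm : MeasurableSet {r : Ioi (0 : ℝ) | c < r} :=
    measurableSet_Ioi.preimage measurable_subtype_coe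
  rw [volumeIoiPow, withDensity_apply _ hm,
    setLIntegral_subtype measurableSet_Ioi _ (fun x : ℝ => ENNReal.ofReal (x ^ N)), himg,
    ← top_le_iff]
  calc ∞ = ∫⁻ _ in Ioi (b + 1), 1 := by simp
    _ ≤ ∫⁻ x in Ioi (b + 1), ENNReal.ofReal (x ^ N) := by
      refine setLIntegral_mono (by fun_prop) fun x hx => ?_
      have hx1 : 1 ≤ x := by have := le_max_left 0 c; linarith [mem_Ioi.1 hx]
      simpa using ENNReal.one_le_ofReal.2 (one_le_pow₀ hx1)
    _ ≤ ∫⁻ x in Ioi b, ENNReal.ofReal (x ^ N) :=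
      lintegral_mono_set (Ioi_subset_Ioi (by linarith))

theorem volumeIoiPow_setOf_coe_lt (N : ℕ) {a : ℝ} (ha : 0 ≤ a) :
    volumeIoiPow N {r | (r : ℝ) < a} = ENNReal.ofReal (a ^ (N + 1) / (N + 1)) := by
  rcases ha.eq_or_lt with rfl | ha
  · have hempty : {r : Ioi (0 : ℝ) | (r : ℝ) < 0} = ∅ :=
      eq_empty_of_forall_notMem fun r (hr : (r : ℝ) < 0) => lt_asymm r.2 hr
    simp [hempty]
  · exact volumeIoiPow_apply_Iio N ⟨a, ha⟩

theorem volumeIoiPow_setOf_coe_lt_rpow (N : ℕ) {a : ℝ} (ha : 0 ≤ a) :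
    volumeIoiPow N {r | (r : ℝ) < a} ^ (1 / ((N : ℝ) + 1)) =
      ENNReal.ofReal a * volumeIoiPow N {r | (r : ℝ) < 1} ^ (1 / ((N : ℝ) + 1)) := by
  have hp : (0 : ℝ) < N + 1 := by positivity
  rw [volumeIoiPow_setOf_coe_lt N ha, volumeIoiPow_setOf_coe_lt N zero_le_one, one_pow,
    div_eq_mul_one_div, ENNReal.ofReal_mul (by positivity),
    ENNReal.mul_rpow_of_nonneg _ _ (by positivity), ENNReal.ofReal_pow ha, ← ENNReal.rpow_natCast,
    ← ENNReal.rpow_mul]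
  push_cast
  rw [mul_one_div_cancel hp.ne', ENNReal.rpow_one, one_div]

def raySection {E : Type*} [SMul ℝ E] (A : Set E) (u : E) : Set (Ioi (0 : ℝ)) :=
  {r | (r : ℝ) • u ∈ A}

section Cone

variable {E : Type*} [AddCommGroup E] [Module ℝ E] {C K : Set E} {u : E}

theorem raySection_sdiff_eq_empty (hC : ∀ x ∈ C, ∀ r : ℝ, 0 ≤ r → r • x ∈ C) (hu : u ∉ C) :
    raySection (C \ K) u = ∅ :=
  eq_empty_of_forall_notMem fun r hr => by
    simpa [inv_smul_smul₀ r.2.out.ne', hu] using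
      hC _ hr.1 (r : ℝ)⁻¹ (inv_nonneg.2 r.2.out.le)

theorem exists_smul_mem_of_volumeIoiPow_raySection_ne_top
    (hC : ∀ x ∈ C, ∀ r : ℝ, 0 ≤ r → r • x ∈ C) (hu : u ∈ C) {N : ℕ}
    (hfin : volumeIoiPow N (raySection (C \ K) u) ≠ ∞) (c : ℝ) :
    ∃ r, c ≤ r ∧ r • u ∈ K := by
  by_contra! hK
  refine hfin (top_le_iff.1 ?_)
  rw [← volumeIoiPow_setOf_lt_coe_eq_top N c]
  exact measure_mono fun r hr => ⟨hC u hu r r.2.le, hK r (le_of_lt hr)⟩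

theorem raySection_sdiff_eq (hC : ∀ x ∈ C, ∀ r : ℝ, 0 ≤ r → r • x ∈ C) (hu : u ∈ C) {a : ℝ}
    (hK : ∀ r : ℝ, 0 ≤ r → (r • u ∈ K ↔ a ≤ r)) :
    raySection (C \ K) u = {r : Ioi (0 : ℝ) | (r : ℝ) < a} := by
  ext r
  change (r : ℝ) • u ∈ C \ K ↔ (r : ℝ) < a
  rw [mem_sdiff, hK r r.2.out.le, not_le]
  exact and_iff_right (hC u hu r r.2.out.le)

theorem smul_mem_sub_smul_add_smul {K₀ K₁ : Set E} {a₀ a₁ l r : ℝ} (hl : l < 1)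
    (h₀ : ∀ s, a₀ ≤ s → s • u ∈ K₀) (h₁ : a₁ • u ∈ K₁)
    (hr : (1 - l) * a₀ + l * a₁ ≤ r) : r • u ∈ (1 - l) • K₀ + l • K₁ := by
  have hl' : 0 < 1 - l := sub_pos.2 hl
  set s := a₀ + (r - ((1 - l) * a₀ + l * a₁)) / (1 - l)
  have hs : (1 - l) * s + l * a₁ = r := by
    simp only [s]
    field_simp
    ring
  rw [← hs, add_smul, mul_smul, mul_smul]
  exact add_mem_add (smul_mem_smul_set (h₀ s (le_add_of_nonneg_right
    (div_nonneg (sub_nonneg.2 hr) hl'.le)))) (smul_mem_smul_set h₁)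

end Cone

theorem volumeIoiPow_raySection_rpow_le {E : Type*} [AddCommGroup E] [Module ℝ E]
    [TopologicalSpace E] [ContinuousSMul ℝ E] (N : ℕ) {C K₀ K₁ : Set E}
    (hC : ∀ x ∈ C, ∀ r : ℝ, 0 ≤ r → r • x ∈ C)
    (hK₀c : IsClosed K₀) (hK₀v : Convex ℝ K₀) (hK₁c : IsClosed K₁) (hK₁v : Convex ℝ K₁)
    {l : ℝ} (hl0 : 0 < l) (hl1 : l < 1) (u : E) :
    volumeIoiPow N (raySection (C \ ((1 - l) • K₀ + l • K₁)) u) ^ (1 / ((N : ℝ) + 1)) ≤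
      ENNReal.ofReal (1 - l) * volumeIoiPow N (raySection (C \ K₀) u) ^ (1 / ((N : ℝ) + 1)) +
        ENNReal.ofReal l * volumeIoiPow N (raySection (C \ K₁) u) ^ (1 / ((N : ℝ) + 1)) := by
  have hp : 0 < 1 / ((N : ℝ) + 1) := by positivity
  by_cases hu : u ∈ C
  swap
  · rw [raySection_sdiff_eq_empty hC hu, measure_empty, ENNReal.zero_rpow_of_pos hp]
    exact zero_le
  rcases eq_or_ne (volumeIoiPow N (raySection (C \ K₀) u)) ∞ with h₀ | h₀
  · rw [h₀, ENNReal.top_rpow_of_pos hp,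
      ENNReal.mul_top (ENNReal.ofReal_pos.2 (sub_pos.2 hl1)).ne', top_add]
    exact le_top
  rcases eq_or_ne (volumeIoiPow N (raySection (C \ K₁) u)) ∞ with h₁ | h₁
  · rw [h₁, ENNReal.top_rpow_of_pos hp, ENNReal.mul_top (ENNReal.ofReal_pos.2 hl0).ne',
      add_top]
    exact le_top
  obtain ⟨a₀, ha₀, hK₀⟩ := hK₀v.exists_forall_smul_mem_iff_le hK₀c
    (exists_smul_mem_of_volumeIoiPow_raySection_ne_top hC hu h₀)
  obtain ⟨a₁, ha₁, hK₁⟩ := hK₁v.exists_forall_smul_mem_iff_le hK₁c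
    (exists_smul_mem_of_volumeIoiPow_raySection_ne_top hC hu h₁)
  have hsub : raySection (C \ ((1 - l) • K₀ + l • K₁)) u ⊆
      {r : Ioi (0 : ℝ) | (r : ℝ) < (1 - l) * a₀ + l * a₁} := fun r hr =>
    not_le.1 fun hle => hr.2 <| smul_mem_sub_smul_add_smul hl1
      (fun s hs => (hK₀ s (ha₀.trans hs)).2 hs) ((hK₁ a₁ ha₁).2 le_rfl) hle
  rw [raySection_sdiff_eq hC hu hK₀, raySection_sdiff_eq hC hu hK₁]
  calc _ ≤ volumeIoiPow N {r | (r : ℝ) < (1 - l) * a₀ + l * a₁} ^ (1 / ((N : ℝ) + 1)) :=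
        ENNReal.rpow_le_rpow (measure_mono hsub) hp.le
    _ = _ := by
      rw [volumeIoiPow_setOf_coe_lt_rpow N (by positivity),
        volumeIoiPow_setOf_coe_lt_rpow N ha₀, volumeIoiPow_setOf_coe_lt_rpow N ha₁,
        ENNReal.ofReal_add (by nlinarith) (by positivity), ENNReal.ofReal_mul (by linarith),
        ENNReal.ofReal_mul hl0.le]
      ring

theorem lintegral_rpow_le_of_ae_rpow_le {α : Type*} [MeasurableSpace α] {μ : Measure α}
    {p : ℝ} (hp : 1 ≤ p) {F F₀ F₁ : α → ℝ≥0∞} (hF₀ : AEMeasurable F₀ μ)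
    (hF₁ : AEMeasurable F₁ μ) (a b : ℝ≥0∞)
    (h : ∀ᵐ x ∂μ, F x ^ (1 / p) ≤ a * F₀ x ^ (1 / p) + b * F₁ x ^ (1 / p)) :
    (∫⁻ x, F x ∂μ) ^ (1 / p) ≤
      a * (∫⁻ x, F₀ x ∂μ) ^ (1 / p) + b * (∫⁻ x, F₁ x ∂μ) ^ (1 / p) := by
  have hp0 : 0 < p := zero_lt_one.trans_le hp
  have hroot : ∀ y : ℝ≥0∞, (y ^ (1 / p)) ^ p = y := fun y => by
    rw [← ENNReal.rpow_mul, one_div_mul_cancel hp0.ne', ENNReal.rpow_one]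
  have hterm : ∀ (c : ℝ≥0∞) (G : α → ℝ≥0∞), AEMeasurable G μ →
      (∫⁻ x, (c * G x ^ (1 / p)) ^ p ∂μ) ^ (1 / p) = c * (∫⁻ x, G x ∂μ) ^ (1 / p) := by
    intro c G hG
    simp_rw [ENNReal.mul_rpow_of_nonneg _ _ hp0.le, hroot]
    rw [lintegral_const_mul'' _ hG, ENNReal.mul_rpow_of_nonneg _ _ (by positivity),
      ← ENNReal.rpow_mul, mul_one_div_cancel hp0.ne', ENNReal.rpow_one]
  calc (∫⁻ x, F x ∂μ) ^ (1 / p)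
      = (∫⁻ x, (F x ^ (1 / p)) ^ p ∂μ) ^ (1 / p) := by simp_rw [hroot]
    _ ≤ (∫⁻ x, (a * F₀ x ^ (1 / p) + b * F₁ x ^ (1 / p)) ^ p ∂μ) ^ (1 / p) := by
      gcongr ?_ ^ _
      exact lintegral_mono_ae (h.mono fun x hx => ENNReal.rpow_le_rpow hx hp0.le)
    _ ≤ (∫⁻ x, (a * F₀ x ^ (1 / p)) ^ p ∂μ) ^ (1 / p) +
        (∫⁻ x, (b * F₁ x ^ (1 / p)) ^ p ∂μ) ^ (1 / p) :=
      ENNReal.lintegral_Lp_add_le ((hF₀.pow_const _).const_mul _)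
        ((hF₁.pow_const _).const_mul _) hp
    _ = a * (∫⁻ x, F₀ x ∂μ) ^ (1 / p) + b * (∫⁻ x, F₁ x ∂μ) ^ (1 / p) := by
      rw [hterm a F₀ hF₀, hterm b F₁ hF₁]

section Polar

variable {E : Type*} [NormedAddCommGroup E] [NormedSpace ℝ E] [FiniteDimensional ℝ E]
  [MeasurableSpace E] [BorelSpace E] (μ : Measure E) [μ.IsAddHaarMeasure]

theorem measurable_volumeIoiPow_raySection (N : ℕ) {A : Set E} (hA : MeasurableSet A) :
    Measurable fun u : sphere (0 : E) 1 => volumeIoiPow N (raySection A u) :=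
  measurable_measure_prodMk_left (hA.preimage (by fun_prop) :
    MeasurableSet {q : sphere (0 : E) 1 × Ioi (0 : ℝ) | (q.2 : ℝ) • (q.1 : E) ∈ A})

theorem lintegral_volumeIoiPow_raySection [Nontrivial E] {A : Set E} (hA : MeasurableSet A) :
    ∫⁻ u : sphere (0 : E) 1,
      volumeIoiPow (Module.finrank ℝ E - 1) (raySection A u) ∂μ.toSphere = μ A := by
  have hA' : MeasurableSet {q : sphere (0 : E) 1 × Ioi (0 : ℝ) | (q.2 : ℝ) • (q.1 : E) ∈ A} :=
    hA.preimage (by fun_prop)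
  have hpre : homeomorphUnitSphereProd E ⁻¹'
      {q : sphere (0 : E) 1 × Ioi (0 : ℝ) | (q.2 : ℝ) • (q.1 : E) ∈ A} = Subtype.val ⁻¹' A := by
    ext x
    simp [smul_inv_smul₀ (norm_ne_zero_iff.2 x.2)]
  have := μ.measurePreserving_homeomorphUnitSphereProd.measure_preimage hA'.nullMeasurableSet
  rw [hpre, comap_subtype_coe_apply (measurableSet_singleton 0).compl,
    Subtype.image_preimage_coe, Measure.prod_apply hA', inter_comm, ← sdiff_eq,
    measure_sdiff_null (measure_singleton 0)] at this
  exact this.symm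

end Polar

theorem addHaar_sdiff_smul_add_smul_rpow_le {E : Type*} [NormedAddCommGroup E]
    [NormedSpace ℝ E] [FiniteDimensional ℝ E] [MeasurableSpace E] [BorelSpace E] (μ : Measure E)
    [μ.IsAddHaarMeasure] {C K₀ K₁ : Set E} (hC_closed : IsClosed C)
    (hC_cone : ∀ x ∈ C, ∀ r : ℝ, 0 ≤ r → r • x ∈ C)
    (hK₀c : IsClosed K₀) (hK₀v : Convex ℝ K₀) (hK₁c : IsClosed K₁) (hK₁v : Convex ℝ K₁)
    {l : ℝ} (hl0 : 0 < l) (hl1 : l < 1) :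
    μ (C \ ((1 - l) • K₀ + l • K₁)) ^ (1 / (Module.finrank ℝ E : ℝ)) ≤
      ENNReal.ofReal (1 - l) * μ (C \ K₀) ^ (1 / (Module.finrank ℝ E : ℝ)) +
        ENNReal.ofReal l * μ (C \ K₁) ^ (1 / (Module.finrank ℝ E : ℝ)) := by
  rcases eq_or_ne (Module.finrank ℝ E) 0 with hd | hd
  · simp only [hd, Nat.cast_zero, div_zero, ENNReal.rpow_zero, mul_one]
    rw [← ENNReal.ofReal_add (by linarith) hl0.le, sub_add_cancel, ENNReal.ofReal_one]
  have : Nontrivial E := Module.nontrivial_of_finrank_pos (Nat.pos_of_ne_zero hd)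
  obtain ⟨N, hN⟩ := Nat.exists_eq_add_one_of_ne_zero hd
  set D := (1 - l) • K₀ + l • K₁
  -- `D` need not be closed, but being convex it is measurable up to a null set.
  obtain ⟨S, hSD, hSm, hSae⟩ := (hC_closed.measurableSet.nullMeasurableSet.diff
    (((hK₀v.smul _).add (hK₁v.smul _)).nullMeasurableSet μ)).exists_measurable_subset_ae_eq
  have hA₀ := hC_closed.measurableSet.diff hK₀c.measurableSet
  have hA₁ := hC_closed.measurableSet.diff hK₁c.measurableSet
  rw [← measure_congr hSae, ← lintegral_volumeIoiPow_raySection μ hSm,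
    ← lintegral_volumeIoiPow_raySection μ hA₀, ← lintegral_volumeIoiPow_raySection μ hA₁, hN,
    Nat.add_sub_cancel, Nat.cast_add_one]
  refine lintegral_rpow_le_of_ae_rpow_le (le_add_of_nonneg_left N.cast_nonneg)
    (measurable_volumeIoiPow_raySection N hA₀).aemeasurable
    (measurable_volumeIoiPow_raySection N hA₁).aemeasurable _ _ (ae_of_all _ fun u => ?_)
  have hsec : raySection S u ⊆ raySection (C \ D) u := fun r hr => hSD hr
  exact (ENNReal.rpow_le_rpow (measure_mono hsec) (by positivity)).trans
    (volumeIoiPow_raySection_rpow_le N hC_cone hK₀c hK₀v hK₁c hK₁v hl0 hl1 u)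

theorem coconvex_brunn_minkowski_general {n : ℕ}
    (C K₀ K₁ : Set (EuclideanSpace ℝ (Fin n)))
    (hC_closed : IsClosed C)
    (hC_cone : ∀ x ∈ C, ∀ r : ℝ, 0 ≤ r → r • x ∈ C)
    (hK₀closed : IsClosed K₀) (hK₀conv : Convex ℝ K₀)
    (hK₁closed : IsClosed K₁) (hK₁conv : Convex ℝ K₁)
    (l : ℝ) (hl0 : 0 < l) (hl1 : l < 1) :
    (volume (C \ ((1 - l) • K₀ + l • K₁))) ^ ((1 : ℝ) / n) ≤
      ENNReal.ofReal (1 - l) * (volume (C \ K₀)) ^ ((1 : ℝ) / n) +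
        ENNReal.ofReal l * (volume (C \ K₁)) ^ ((1 : ℝ) / n) := by
  simpa only [finrank_euclideanSpace_fin] using addHaar_sdiff_smul_add_smul_rpow_le volume
    hC_closed hC_cone hK₀closed hK₀conv hK₁closed hK₁conv hl0 hl1

/-- Complemented Brunn–Minkowski inequality for `C`-coconvex sets. -/
theorem coconvex_brunn_minkowski {n : ℕ}
    (C K₀ K₁ : Set (EuclideanSpace ℝ (Fin n)))
    (hC_closed : IsClosed C) (hC_conv : Convex ℝ C)
    (hC_cone : ∀ x ∈ C, ∀ r : ℝ, 0 ≤ r → r • x ∈ C)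
    (hC_pointed : C ∩ (-C) = {0})
    (hC_int : (interior C).Nonempty)
    (hK₀C : K₀ ⊆ C) (hK₀closed : IsClosed K₀) (hK₀conv : Convex ℝ K₀)
    (hK₁C : K₁ ⊆ C) (hK₁closed : IsClosed K₁) (hK₁conv : Convex ℝ K₁)
    (hA₀pos : 0 < volume (C \ K₀)) (hA₀fin : volume (C \ K₀) < ⊤)
    (hA₁pos : 0 < volume (C \ K₁)) (hA₁fin : volume (C \ K₁) < ⊤)
    (l : ℝ) (hl0 : 0 < l) (hl1 : l < 1) :
    (volume (C \ ((1 - l) • K₀ + l • K₁))) ^ ((1 : ℝ) / n) ≤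
      ENNReal.ofReal (1 - l) * (volume (C \ K₀)) ^ ((1 : ℝ) / n) +
        ENNReal.ofReal l * (volume (C \ K₁)) ^ ((1 : ℝ) / n) :=
  coconvex_brunn_minkowski_general C K₀ K₁ hC_closed hC_cone hK₀closed hK₀conv hK₁closed hK₁conv l
    hl0 hl1
end

section
/- Let $C \subset \mathbb{R}^n$ be a pointed closed convex cone with nonempty interior, and let $K \subseteq C$ be closed and convex such that $A = C \setminus K$ has finite positive Lebesgue measure. Then every ray from the origin through an interior point of $C$ meets the boundary of $A$ exactly once; equivalently, for each $u \in \mathrm{int}\,C$ with $\|u\| = 1$, the set $\{r \ge 0 : ru \in C \setminus K\}$ is an interval of the form $[0, \rho(u))$ or $[0, \rho(u)]$ with $0 < \rho(u) < \infty$. -/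
open Set Pointwise MeasureTheory Metric Filter

/-! If `0 ∈ K`, convexity of `K` makes `A = C \ K` stable under the dilation `x ↦ 2 • x`, which
multiplies Lebesgue measure by `2 ^ n`, so `A` would have measure `0` or `∞`. If the ray through
`u ∈ int C` left `K` at arbitrarily large `r`, a hyperplane separating `r • u` from `K` would cut
out of the ball `B(r • u, r ε) ⊆ C` a ball of radius `r ε / 2` missing `K`, and these balls of
unbounded radius again force `volume A = ∞`. Hence `{r | r • u ∈ K}` is a closed convex subset
of `ℝ` avoiding `0` and containing a half-line, i.e. `[ρ, ∞)` with `ρ > 0`. -/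

section Separation

variable {E : Type*} [NormedAddCommGroup E] [InnerProductSpace ℝ E] [CompleteSpace E]

theorem Convex.exists_ball_subset_ball_disjoint {K : Set E} (hK : Convex ℝ K) (hKc : IsClosed K)
    {p : E} (hp : p ∉ K) (s : ℝ) :
    ∃ z, ball z s ⊆ ball p (2 * s) ∧ Disjoint (ball z s) K := by
  obtain ⟨f, c, hfp, hfK⟩ := geometric_hahn_banach_point_closed hK hKc hp
  set g := (InnerProductSpace.toDual ℝ E).symm f
  have hf : ∀ x, f x = inner ℝ g x := fun x => InnerProductSpace.toDual_symm_apply.symm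
  -- `v = 0` when `g = 0`, which happens only for `K = ∅`
  set v := ‖g‖⁻¹ • g
  have hv : ‖v‖ ≤ 1 := by
    rw [norm_smul, norm_inv, norm_norm]
    exact inv_mul_le_one
  have hgv : inner ℝ g v = ‖g‖ := by
    rw [real_inner_smul_right, real_inner_self_eq_norm_sq]
    rcases eq_or_ne ‖g‖ 0 with h | h
    · simp [h]
    · field_simp
  refine ⟨p - s • v, fun y hy => ?_, Set.disjoint_left.2 fun y hy hyK => ?_⟩
  all_goals rw [mem_ball, dist_eq_norm] at hy
  · have hs : 0 < s := (norm_nonneg _).trans_lt hy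
    rw [mem_ball, dist_eq_norm]
    calc ‖y - p‖ = ‖(y - (p - s • v)) - s • v‖ := by congr 1; abel
      _ ≤ ‖y - (p - s • v)‖ + ‖s • v‖ := norm_sub_le _ _
      _ < s + s := by
        refine add_lt_add_of_lt_of_le hy ?_
        rw [norm_smul, Real.norm_of_nonneg hs.le]
        exact mul_le_of_le_one_right hs.le hv
      _ = 2 * s := by ring
  · have hfy : f y = f p - s * ‖g‖ + inner ℝ g (y - (p - s • v)) := by
      rw [hf, hf, ← hgv, ← real_inner_smul_right, ← inner_sub_right, ← inner_add_right]
      congr 1; abel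
    have hfy_le : f y ≤ f p := by
      have := real_inner_le_norm g (y - (p - s • v))
      have := mul_le_mul_of_nonneg_left hy.le (norm_nonneg g)
      linarith
    linarith [hfK y hyK]

end Separation

section AddHaar

variable {E : Type*} [NormedAddCommGroup E] [NormedSpace ℝ E] [FiniteDimensional ℝ E]
  [MeasurableSpace E] [BorelSpace E] [Nontrivial E] (μ : Measure E) [μ.IsAddHaarMeasure]

theorem MeasureTheory.Measure.addHaar_eq_top_of_forall_exists_ball_subset {A : Set E}
    (h : ∀ R : ℝ, ∃ x, ball x R ⊆ A) : μ A = ⊤ := by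
  rw [eq_top_iff, ← measure_univ_of_isAddLeftInvariant μ, ← iUnion_ball_nat 0,
    Monotone.measure_iUnion fun _ _ hmn => ball_subset_ball (Nat.cast_le.2 hmn)]
  refine iSup_le fun N => ?_
  obtain ⟨x, hx⟩ := h N
  rw [← Measure.addHaar_ball_center μ x]
  exact measure_mono hx

theorem MeasureTheory.Measure.addHaar_eq_zero_or_top_of_smul_subset {A : Set E} {t : ℝ}
    (ht : 1 < t) (h : t • A ⊆ A) : μ A = 0 ∨ μ A = ⊤ := by
  by_contra! hA
  have hle : ENNReal.ofReal (t ^ Module.finrank ℝ E) * μ A ≤ 1 * μ A := by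
    rw [one_mul, ← Measure.addHaar_smul_of_nonneg μ (zero_le_one.trans ht.le)]
    exact measure_mono h
  rw [ENNReal.mul_le_mul_iff_left hA.1 hA.2, ENNReal.ofReal_le_one] at hle
  exact hle.not_gt (one_lt_pow₀ ht Module.finrank_pos.ne')

theorem zero_notMem_of_measure_diff_pos_of_lt_top {C K : Set E}
    (hC : ∀ x ∈ C, ∀ r : ℝ, 0 ≤ r → r • x ∈ C)
    (hK : Convex ℝ K) (hpos : 0 < μ (C \ K)) (hfin : μ (C \ K) < ⊤) : (0 : E) ∉ K := by
  intro h0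
  have hdil : (2 : ℝ) • (C \ K) ⊆ C \ K := by
    rintro _ ⟨x, ⟨hxC, hxK⟩, rfl⟩
    refine ⟨hC x hxC 2 zero_le_two, fun h2x => hxK ?_⟩
    simpa [smul_smul] using hK.smul_mem_of_zero_mem h0 h2x (t := 2⁻¹) ⟨by norm_num, by norm_num⟩
  rcases Measure.addHaar_eq_zero_or_top_of_smul_subset μ one_lt_two hdil with h | h
  · exact hpos.ne' h
  · exact hfin.ne h

end AddHaar

theorem Real.exists_pos_eq_Ici_of_isClosed_of_convex {T : Set ℝ} (hTc : IsClosed T)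
    (hT : Convex ℝ T) (h0 : 0 ∉ T) (htail : ∀ᶠ r in atTop, r ∈ T) : ∃ ρ > 0, T = Ici ρ := by
  obtain ⟨b, hb⟩ := eventually_atTop.1 htail
  have hpos : ∀ r ∈ T, 0 < r := fun r hr => by
    by_contra! hr0
    exact h0 (hT.ordConnected.out hr (hb _ (le_max_left b 0)) ⟨hr0, le_max_right b 0⟩)
  have hne : T.Nonempty := ⟨b, hb b le_rfl⟩
  have hbdd : BddBelow T := ⟨0, fun r hr => (hpos r hr).le⟩
  have hρ : sInf T ∈ T := hTc.csInf_mem hne hbdd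
  refine ⟨sInf T, hpos _ hρ, Subset.antisymm (fun r hr => csInf_le hbdd hr) fun r hr => ?_⟩
  exact hT.ordConnected.out hρ (hb _ (le_max_right r b)) ⟨hr, le_max_left r b⟩

section Ray

variable {E : Type*} [NormedAddCommGroup E] [InnerProductSpace ℝ E] [FiniteDimensional ℝ E]
  [MeasurableSpace E] [BorelSpace E] [Nontrivial E] (μ : Measure E) [μ.IsAddHaarMeasure]
  {C K : Set E}

theorem eventually_smul_mem_of_measure_diff_lt_top (hC : ∀ x ∈ C, ∀ r : ℝ, 0 ≤ r → r • x ∈ C)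
    (hK : Convex ℝ K) (hKc : IsClosed K) (hfin : μ (C \ K) < ⊤) {u : E} (hu : u ∈ interior C) :
    ∀ᶠ r : ℝ in atTop, r • u ∈ K := by
  by_contra h
  rw [not_eventually, frequently_atTop] at h
  obtain ⟨ε, hε, hεC⟩ := Metric.isOpen_iff.1 isOpen_interior u hu
  refine hfin.ne (Measure.addHaar_eq_top_of_forall_exists_ball_subset μ fun R => ?_)
  obtain ⟨r, hr, hrK⟩ := h (max 1 (2 * R / ε))
  have hr0 : 0 < r := zero_lt_one.trans_le ((le_max_left _ _).trans hr)
  have hRr : R ≤ r * ε / 2 := by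
    have := (le_max_right _ _).trans hr
    rw [div_le_iff₀ hε] at this
    linarith
  obtain ⟨z, hzC, hzK⟩ := hK.exists_ball_subset_ball_disjoint hKc hrK (r * ε / 2)
  have hball : ball (r • u) (r * ε) ⊆ C := by
    rw [show ball (r • u) (r * ε) = r • ball u ε by
      rw [_root_.smul_ball hr0.ne', Real.norm_of_nonneg hr0.le]]
    rintro _ ⟨x, hx, rfl⟩
    exact hC x (interior_subset (hεC hx)) r hr0.le
  refine ⟨z, fun y hy => ?_⟩
  have hy : y ∈ ball z (r * ε / 2) := ball_subset_ball hRr hy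
  refine ⟨hball ?_, Set.disjoint_left.1 hzK hy⟩
  simpa [mul_div_cancel₀] using hzC hy

end Ray

theorem coconvex_ray_structure_general {n : ℕ}
    (C K : Set (EuclideanSpace ℝ (Fin n)))
    (hC_cone : ∀ x ∈ C, ∀ r : ℝ, 0 ≤ r → r • x ∈ C)
    (hKclosed : IsClosed K) (hKconv : Convex ℝ K)
    (hApos : 0 < volume (C \ K)) (hAfin : volume (C \ K) < ⊤)
    (u : EuclideanSpace ℝ (Fin n)) (hu : u ∈ interior C) (hunorm : ‖u‖ = 1) :
    ∃ ρ : ℝ, 0 < ρ ∧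
      ({r : ℝ | 0 ≤ r ∧ r • u ∈ C \ K} = Set.Ico 0 ρ ∨
       {r : ℝ | 0 ≤ r ∧ r • u ∈ C \ K} = Set.Icc 0 ρ) := by
  have : Nontrivial (EuclideanSpace ℝ (Fin n)) :=
    nontrivial_of_ne u 0 (norm_ne_zero_iff.1 (by simp [hunorm]))
  obtain ⟨ρ, hρ, hT⟩ : ∃ ρ > 0, (fun r : ℝ => r • u) ⁻¹' K = Ici ρ := by
    refine Real.exists_pos_eq_Ici_of_isClosed_of_convex (hKclosed.preimage (by fun_prop))
      (hKconv.linear_preimage (LinearMap.toSpanSingleton ℝ _ u)) ?_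
      (eventually_smul_mem_of_measure_diff_lt_top volume hC_cone hKconv hKclosed hAfin hu)
    simpa using zero_notMem_of_measure_diff_pos_of_lt_top volume hC_cone hKconv hApos hAfin
  refine ⟨ρ, hρ, Or.inl (Set.ext fun r => ?_)⟩
  have hrK : r • u ∈ K ↔ ρ ≤ r := Set.ext_iff.1 hT r
  simp only [mem_ofPred_eq, Set.mem_sdiff, mem_Ico, hrK, not_le]
  exact ⟨fun ⟨hr, _, hrρ⟩ => ⟨hr, hrρ⟩,
    fun ⟨hr, hrρ⟩ => ⟨hr, hC_cone u (interior_subset hu) r hr, hrρ⟩⟩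

/-- Every ray from the origin through an interior point of `C` meets the boundary
of the coconvex set `A = C \ K` exactly once: for each unit vector `u ∈ int C`,
the set `{r ≥ 0 : r • u ∈ C \ K}` is an interval `[0, ρ)` or `[0, ρ]` with
`0 < ρ < ∞`. -/
theorem coconvex_ray_structure {n : ℕ}
    (C K : Set (EuclideanSpace ℝ (Fin n)))
    (hC_closed : IsClosed C) (hC_conv : Convex ℝ C)
    (hC_cone : ∀ x ∈ C, ∀ r : ℝ, 0 ≤ r → r • x ∈ C)
    (hC_pointed : C ∩ (-C) = {0})
    (hC_int : (interior C).Nonempty)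
    (hKC : K ⊆ C) (hKclosed : IsClosed K) (hKconv : Convex ℝ K)
    (hApos : 0 < volume (C \ K)) (hAfin : volume (C \ K) < ⊤)
    (u : EuclideanSpace ℝ (Fin n)) (hu : u ∈ interior C) (hunorm : ‖u‖ = 1) :
    ∃ ρ : ℝ, 0 < ρ ∧
      ({r : ℝ | 0 ≤ r ∧ r • u ∈ C \ K} = Set.Ico 0 ρ ∨
       {r : ℝ | 0 ≤ r ∧ r • u ∈ C \ K} = Set.Icc 0 ρ) :=
  coconvex_ray_structure_general C K hC_cone hKclosed hKconv hApos hAfin u hu hunorm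
end

section
/- Let $C \subset \mathbb{R}^n$ be a pointed closed convex cone with nonempty interior, $\omega \subset \Omega_C$ a nonempty compact set, and $f : \omega \to (0, \infty)$ continuous. Then the Wulff shape $K = C \cap \bigcap_{u \in \omega} \{x : \langle x, u \rangle \le -f(u)\}$ is a closed convex subset of $C$ with $C \setminus K$ bounded and nonempty (i.e., $K$ is $C$-full). -/
open Set Pointwise MeasureTheory RealInnerProductSpace

/-!
A compact set `ω` inside the open set `int C°` has a closed `a`-neighbourhood, `a > 0`, still
inside `C°`. Testing the point `u + a x / ‖x‖ ∈ C°` against `x ∈ C` gives the uniform estimate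
`⟪x, u⟫ ≤ -a ‖x‖` on `C × ω`. Hence a point `x ∈ C` violating some constraint
`⟪x, u⟫ ≤ -f u` satisfies `a ‖x‖ < f u ≤ max_ω f`, so `C \ K` is bounded; it contains `0`
because `f > 0`.
-/

variable {E : Type*} [NormedAddCommGroup E] [InnerProductSpace ℝ E]

def polarCone (C : Set E) : Set E := {u | ∀ x ∈ C, ⟪u, x⟫ ≤ 0}

def wulffShape (C ω : Set E) (f : E → ℝ) : Set E := C ∩ ⋂ u ∈ ω, {x | ⟪x, u⟫ ≤ -f u}

section Polar

variable {C : Set E}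

theorem inner_le_neg_mul_norm_of_closedBall_subset_polarCone {u x : E} {ε : ℝ} (hε : 0 ≤ ε)
    (hball : Metric.closedBall u ε ⊆ polarCone C) (hx : x ∈ C) : ⟪x, u⟫ ≤ -ε * ‖x‖ := by
  rcases eq_or_ne x 0 with rfl | hx0
  · simp
  have hxn : 0 < ‖x‖ := norm_pos_iff.2 hx0
  set v := u + (ε / ‖x‖) • x
  have hv : v ∈ Metric.closedBall u ε := by
    rw [Metric.mem_closedBall, dist_eq_norm, add_sub_cancel_left, norm_smul, Real.norm_eq_abs,
      abs_of_nonneg (by positivity), div_mul_cancel₀ _ hxn.ne']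
  have hvx : ⟪v, x⟫ = ⟪x, u⟫ + ε * ‖x‖ := by
    rw [inner_add_left, real_inner_smul_left, real_inner_self_eq_norm_sq, real_inner_comm]
    field_simp
  linarith [hball hv x hx]

theorem IsCompact.exists_pos_inner_le_neg_mul_norm {ω : Set E} (hω : IsCompact ω)
    (hωC : ω ⊆ interior (polarCone C)) : ∃ a > 0, ∀ u ∈ ω, ∀ x ∈ C, ⟪x, u⟫ ≤ -a * ‖x‖ := by
  obtain ⟨a, ha, hthick⟩ := hω.exists_cthickening_subset_open isOpen_interior hωC
  refine ⟨a, ha, fun u hu x hx => inner_le_neg_mul_norm_of_closedBall_subset_polarCone ha.le ?_ hx⟩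
  exact (Metric.closedBall_subset_cthickening hu a).trans (hthick.trans interior_subset)

end Polar

section WulffShape

variable {C ω : Set E} {f : E → ℝ}

theorem isClosed_wulffShape (hC : IsClosed C) : IsClosed (wulffShape C ω f) :=
  hC.inter <| isClosed_biInter fun _ _ => isClosed_le (continuous_id.inner continuous_const)
    continuous_const

theorem convex_wulffShape (hC : Convex ℝ C) : Convex ℝ (wulffShape C ω f) :=
  hC.inter <| convex_iInter₂ fun u _ => convex_halfSpace_le
    ⟨fun x y => inner_add_left x y u, fun c x => real_inner_smul_left x u c⟩ _

theorem wulffShape_subset : wulffShape C ω f ⊆ C := inter_subset_left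

theorem diff_wulffShape_subset_closedBall {a M : ℝ} (ha : 0 < a)
    (hinner : ∀ u ∈ ω, ∀ x ∈ C, ⟪x, u⟫ ≤ -a * ‖x‖) (hM : ∀ u ∈ ω, f u ≤ M) :
    C \ wulffShape C ω f ⊆ Metric.closedBall 0 (M / a) := by
  rintro x ⟨hxC, hxK⟩
  obtain ⟨u, hu, hviol⟩ : ∃ u ∈ ω, -f u < ⟪x, u⟫ := by
    by_contra! h
    exact hxK ⟨hxC, mem_iInter₂.2 h⟩
  rw [Metric.mem_closedBall, dist_zero_right, le_div_iff₀ ha]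
  linarith [hinner u hu x hxC, hM u hu]

theorem isBounded_diff_wulffShape (hω : IsCompact ω) (hωC : ω ⊆ interior (polarCone C))
    (hf : ContinuousOn f ω) : Bornology.IsBounded (C \ wulffShape C ω f) := by
  obtain ⟨a, ha, hinner⟩ := hω.exists_pos_inner_le_neg_mul_norm hωC
  obtain ⟨M, hM⟩ := hω.bddAbove_image hf
  exact Metric.isBounded_closedBall.subset
    (diff_wulffShape_subset_closedBall ha hinner fun u hu => hM ⟨u, hu, rfl⟩)

theorem zero_notMem_wulffShape {u : E} (hu : u ∈ ω) (hfu : 0 < f u) : 0 ∉ wulffShape C ω f :=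
  fun h => by
    have h0 : ⟪(0 : E), u⟫ ≤ -f u := mem_iInter₂.1 h.2 u hu
    linarith [inner_zero_left (𝕜 := ℝ) u]

end WulffShape

theorem wulff_shape_is_cfull_general {n : ℕ}
    (C : Set (EuclideanSpace ℝ (Fin n)))
    (hC_closed : IsClosed C) (hC_conv : Convex ℝ C)
    (hC_cone : ∀ x ∈ C, ∀ r : ℝ, 0 ≤ r → r • x ∈ C)
    (hC_int : (interior C).Nonempty)
    (ω : Set (EuclideanSpace ℝ (Fin n)))
    (hω : ω ⊆ Metric.sphere (0 : EuclideanSpace ℝ (Fin n)) 1 ∩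
        interior {x : EuclideanSpace ℝ (Fin n) | ∀ y ∈ C, ⟪x, y⟫ ≤ 0})
    (hωcompact : IsCompact ω) (hωne : ω.Nonempty)
    (f : EuclideanSpace ℝ (Fin n) → ℝ) (hfpos : ∀ u ∈ ω, 0 < f u)
    (hfcont : ContinuousOn f ω) :
    IsClosed (C ∩ ⋂ u ∈ ω, {x : EuclideanSpace ℝ (Fin n) | ⟪x, u⟫ ≤ -f u}) ∧
    Convex ℝ (C ∩ ⋂ u ∈ ω, {x : EuclideanSpace ℝ (Fin n) | ⟪x, u⟫ ≤ -f u}) ∧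
    (C ∩ ⋂ u ∈ ω, {x : EuclideanSpace ℝ (Fin n) | ⟪x, u⟫ ≤ -f u}) ⊆ C ∧
    Bornology.IsBounded
      (C \ (C ∩ ⋂ u ∈ ω, {x : EuclideanSpace ℝ (Fin n) | ⟪x, u⟫ ≤ -f u})) ∧
    (C \ (C ∩ ⋂ u ∈ ω, {x : EuclideanSpace ℝ (Fin n) | ⟪x, u⟫ ≤ -f u})).Nonempty := by
  obtain ⟨x₀, hx₀⟩ := hC_int
  have h0C : (0 : EuclideanSpace ℝ (Fin n)) ∈ C := by
    simpa using hC_cone x₀ (interior_subset hx₀) 0 le_rfl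
  obtain ⟨u, hu⟩ := hωne
  exact ⟨isClosed_wulffShape hC_closed, convex_wulffShape hC_conv, wulffShape_subset,
    isBounded_diff_wulffShape hωcompact (fun v hv => (hω hv).2) hfcont,
    0, h0C, zero_notMem_wulffShape hu (hfpos u hu)⟩

/-- The Wulff shape `K = C ∩ ⋂_{u ∈ ω} {x : ⟪x,u⟫ ≤ -f(u)}` associated with a
nonempty compact `ω ⊂ Ω_C` and a positive continuous `f` is a closed convex
subset of `C` whose complement in `C` is bounded and nonempty (`K` is `C`-full). -/
theorem wulff_shape_is_cfull {n : ℕ}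
    (C : Set (EuclideanSpace ℝ (Fin n)))
    (hC_closed : IsClosed C) (hC_conv : Convex ℝ C)
    (hC_cone : ∀ x ∈ C, ∀ r : ℝ, 0 ≤ r → r • x ∈ C)
    (hC_pointed : C ∩ (-C) = {0})
    (hC_int : (interior C).Nonempty)
    (ω : Set (EuclideanSpace ℝ (Fin n)))
    (hω : ω ⊆ Metric.sphere (0 : EuclideanSpace ℝ (Fin n)) 1 ∩
        interior {x : EuclideanSpace ℝ (Fin n) | ∀ y ∈ C, ⟪x, y⟫ ≤ 0})
    (hωcompact : IsCompact ω) (hωne : ω.Nonempty)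
    (f : EuclideanSpace ℝ (Fin n) → ℝ) (hfpos : ∀ u ∈ ω, 0 < f u)
    (hfcont : ContinuousOn f ω) :
    IsClosed (C ∩ ⋂ u ∈ ω, {x : EuclideanSpace ℝ (Fin n) | ⟪x, u⟫ ≤ -f u}) ∧
    Convex ℝ (C ∩ ⋂ u ∈ ω, {x : EuclideanSpace ℝ (Fin n) | ⟪x, u⟫ ≤ -f u}) ∧
    (C ∩ ⋂ u ∈ ω, {x : EuclideanSpace ℝ (Fin n) | ⟪x, u⟫ ≤ -f u}) ⊆ C ∧
    Bornology.IsBounded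
      (C \ (C ∩ ⋂ u ∈ ω, {x : EuclideanSpace ℝ (Fin n) | ⟪x, u⟫ ≤ -f u})) ∧
    (C \ (C ∩ ⋂ u ∈ ω, {x : EuclideanSpace ℝ (Fin n) | ⟪x, u⟫ ≤ -f u})).Nonempty :=
  wulff_shape_is_cfull_general C hC_closed hC_conv hC_cone hC_int ω hω hωcompact hωne f hfpos hfcont
end

section
/- Let $C \subset \mathbb{R}^n$ be a pointed closed convex cone with nonempty interior, $\omega \subset \Omega_C$ a nonempty compact set, and $K \in \mathcal{K}(C, \omega)$, i.e., $K = C \cap \bigcap_{u \in \omega} H^-(K, u)$ where $H^-(K,u)$ is the supporting halfspace with outer normal $u$. Then every point of $C \setminus K$ has norm at most $\frac{1}{a_0} \max\{-h(K,u) : u \in \omega\}$, where $a_0 > 0$ satisfies $\langle x, u\rangle \le -a_0\|x\|$ for all $x \in C$, $u \in \omega$. In particular $C \setminus K$ is bounded. -/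
/-!
A point `x ∈ C \ K` violates one of the defining halfspaces, say `h(K,u) < ⟪x,u⟫` with `u ∈ ω`.
Since `⟪x,u⟫ ≤ -a₀‖x‖` on `C`, this gives `a₀‖x‖ < -h(K,u)`, and the right-hand side is at most
the supremum of `-h(K,·)` over `ω`, which is finite because `ω` is bounded and `K` is nonempty.
-/

open Set Pointwise MeasureTheory RealInnerProductSpace

section

variable {E : Type*} [NormedAddCommGroup E] [InnerProductSpace ℝ E]

theorem bddAbove_neg_sSup_inner_image {K ω : Set E} (hK : K.Nonempty)
    (hω : Bornology.IsBounded ω) (hbdd : ∀ u ∈ ω, BddAbove ((fun y => ⟪y, u⟫) '' K)) :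
    BddAbove ((fun u => -sSup ((fun y => ⟪y, u⟫) '' K)) '' ω) := by
  obtain ⟨y₀, hy₀⟩ := hK
  obtain ⟨R, hR⟩ := isBounded_iff_forall_norm_le.mp hω
  refine ⟨‖y₀‖ * R, ?_⟩
  rintro _ ⟨u, hu, rfl⟩
  calc -sSup ((fun y => ⟪y, u⟫) '' K) ≤ -⟪y₀, u⟫ :=
        neg_le_neg (le_csSup (hbdd u hu) (mem_image_of_mem _ hy₀))
    _ ≤ ‖y₀‖ * ‖u‖ := (neg_le_abs _).trans (abs_real_inner_le_norm y₀ u)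
    _ ≤ ‖y₀‖ * R := by gcongr; exact hR u hu

theorem norm_le_of_notMem_iInter_halfspace {C ω : Set E} {h : E → ℝ} {a₀ : ℝ} (ha₀ : 0 < a₀)
    (hsep : ∀ x ∈ C, ∀ u ∈ ω, ⟪x, u⟫ ≤ -a₀ * ‖x‖) (hbdd : BddAbove ((fun u => -h u) '' ω))
    {x : E} (hxC : x ∈ C) (hx : x ∉ ⋂ u ∈ ω, {x | ⟪x, u⟫ ≤ h u}) :
    ‖x‖ ≤ (1 / a₀) * sSup ((fun u => -h u) '' ω) := by
  simp only [mem_iInter, mem_ofPred_eq, not_forall, not_le] at hx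
  obtain ⟨u, hu, hlt⟩ := hx
  have hle : -h u ≤ sSup ((fun u => -h u) '' ω) := le_csSup hbdd (mem_image_of_mem _ hu)
  rw [one_div_mul_eq_div, le_div_iff₀ ha₀]
  linarith [hsep x hxC u hu]

end

theorem cdetermined_complement_bounded_general {n : ℕ}
    (C K : Set (EuclideanSpace ℝ (Fin n)))
    (ω : Set (EuclideanSpace ℝ (Fin n)))
    (hω : ω ⊆ Metric.sphere (0 : EuclideanSpace ℝ (Fin n)) 1 ∩
        interior {x : EuclideanSpace ℝ (Fin n) | ∀ y ∈ C, ⟪x, y⟫ ≤ 0})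
    (hKne : K.Nonempty)
    (hK : K = C ∩ ⋂ u ∈ ω,
      {x : EuclideanSpace ℝ (Fin n) | ⟪x, u⟫ ≤ sSup ((fun y => ⟪y, u⟫) '' K)})
    (a₀ : ℝ) (ha₀ : 0 < a₀)
    (ha₀sep : ∀ x ∈ C, ∀ u ∈ ω, ⟪x, u⟫ ≤ -a₀ * ‖x‖) :
    (∀ x ∈ C \ K, ‖x‖ ≤ (1 / a₀) * sSup ((fun u => -sSup ((fun y => ⟪y, u⟫) '' K)) '' ω)) ∧
    Bornology.IsBounded (C \ K) := by
  have hKC : K ⊆ C := hK ▸ inter_subset_left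
  have hsupp : ∀ u ∈ ω, BddAbove ((fun y => ⟪y, u⟫) '' K) := by
    refine fun u hu => ⟨0, ?_⟩
    rintro _ ⟨y, hy, rfl⟩
    have := ha₀sep y (hKC hy) u hu
    have : 0 ≤ a₀ * ‖y‖ := by positivity
    linarith
  have hωbdd : Bornology.IsBounded ω :=
    Metric.isBounded_sphere.subset fun u hu => (hω hu).1
  have hnorm : ∀ x ∈ C \ K,
      ‖x‖ ≤ (1 / a₀) * sSup ((fun u => -sSup ((fun y => ⟪y, u⟫) '' K)) '' ω) := by
    rintro x ⟨hxC, hxK⟩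
    refine norm_le_of_notMem_iInter_halfspace ha₀ ha₀sep
      (bddAbove_neg_sSup_inner_image hKne hωbdd hsupp) hxC fun hx => hxK ?_
    exact hK ▸ ⟨hxC, hx⟩
  exact ⟨hnorm, isBounded_iff_forall_norm_le.mpr ⟨_, hnorm⟩⟩

/-- If `K` is `C`-determined by a nonempty compact `ω ⊂ Ω_C`, i.e.
`K = C ∩ ⋂_{u ∈ ω} H⁻(K,u)`, and `a₀ > 0` satisfies `⟪x,u⟫ ≤ -a₀‖x‖` on `C × ω`,
then every `x ∈ C \ K` satisfies `‖x‖ ≤ (1/a₀) * sup {-h(K,u) : u ∈ ω}`;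
in particular `C \ K` is bounded. -/
theorem cdetermined_complement_bounded {n : ℕ}
    (C K : Set (EuclideanSpace ℝ (Fin n)))
    (hC_closed : IsClosed C) (hC_conv : Convex ℝ C)
    (hC_cone : ∀ x ∈ C, ∀ r : ℝ, 0 ≤ r → r • x ∈ C)
    (hC_pointed : C ∩ (-C) = {0})
    (hC_int : (interior C).Nonempty)
    (ω : Set (EuclideanSpace ℝ (Fin n)))
    (hω : ω ⊆ Metric.sphere (0 : EuclideanSpace ℝ (Fin n)) 1 ∩
        interior {x : EuclideanSpace ℝ (Fin n) | ∀ y ∈ C, ⟪x, y⟫ ≤ 0})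
    (hωcompact : IsCompact ω) (hωne : ω.Nonempty)
    (hKne : K.Nonempty)
    (hK : K = C ∩ ⋂ u ∈ ω,
      {x : EuclideanSpace ℝ (Fin n) | ⟪x, u⟫ ≤ sSup ((fun y => ⟪y, u⟫) '' K)})
    (a₀ : ℝ) (ha₀ : 0 < a₀)
    (ha₀sep : ∀ x ∈ C, ∀ u ∈ ω, ⟪x, u⟫ ≤ -a₀ * ‖x‖) :
    (∀ x ∈ C \ K, ‖x‖ ≤ (1 / a₀) * sSup ((fun u => -sSup ((fun y => ⟪y, u⟫) '' K)) '' ω)) ∧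
    Bornology.IsBounded (C \ K) :=
  cdetermined_complement_bounded_general C K ω hω hKne hK a₀ ha₀ ha₀sep
end
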